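/- Let G be a second countable locally compact Hausdorff residually compact group with a residually compact approximation (G_n)_{n∈ℕ}, and let d¹ and d² be two proper, right-invariant, compatible metrics on G. For each n let d¹_n and d²_n denote the induced quotient metrics on the coset space G/G_n. Then there exists a monotonically increasing function ρ : [0,∞) → [0,∞) with ρ(t) → ∞ as t → ∞ such that d²_n(x,y) ≤ ρ(d¹_n(x,y)) for every n ∈ ℕ and all x, y ∈ G/G_n. -/

import Mathlib

/-!
Right invariance gives `d (a, b) = d (1, a * b⁻¹)`, so each metric is determined by its length
function `g ↦ d (1, g)`. Since `d¹` is proper and `d²` is continuous, `d²`-lengths are bounded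
on every closed `d¹`-ball; the supremum `σ t` over the `d¹`-ball of radius `t` controls `d²` by
`σ ∘ d¹` pointwise on `G`. Passing to an almost-optimal pair of coset representatives, the same
control survives on every quotient `G/H` at the cost of a shift, `d²_H ≤ σ (d¹_H + 1)`.
-/

open Filter Pointwise

/-- A subgroup `H` of a topological group `G` is *cocompact* if there is a compact set
`K ⊆ G` with `G = K * H`. -/
def IsCocompactSubgroup {G : Type*} [Group G] [TopologicalSpace G] (H : Subgroup G) : Prop :=
  ∃ K : Set G, IsCompact K ∧ K * (H : Set G) = Set.univ

/-- A *proper, right-invariant, compatible metric* on a topological group `G`. -/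
structure PRICMetric (G : Type*) [Group G] [TopologicalSpace G] where
  d : G → G → ℝ
  d_self : ∀ x, d x x = 0
  eq_of_d_eq_zero : ∀ x y, d x y = 0 → x = y
  d_symm : ∀ x y, d x y = d y x
  d_triangle : ∀ x y z, d x z ≤ d x y + d y z
  right_invariant : ∀ g₁ g₂ h, d (g₁ * h) (g₂ * h) = d g₁ g₂
  proper : ∀ x r, IsCompact {y | d x y ≤ r}
  compatible : ∀ s : Set G, IsOpen s ↔ ∀ x ∈ s, ∃ ε > 0, {y | d x y < ε} ⊆ s

/-- The quotient metric on `G/H` induced by a metric on `G`, expressed on coset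
representatives: `d'(g₁H, g₂H) = inf {d(g₁h₁, g₂h₂) : h₁, h₂ ∈ H}`. -/
noncomputable def quotDist {G : Type*} [Group G] [TopologicalSpace G]
    (M : PRICMetric G) (H : Subgroup G) (g₁ g₂ : G) : ℝ :=
  sInf {r | ∃ h₁ ∈ H, ∃ h₂ ∈ H, r = M.d (g₁ * h₁) (g₂ * h₂)}

namespace PRICMetric

variable {G : Type*} [Group G] [TopologicalSpace G] (M : PRICMetric G)

lemma d_nonneg (x y : G) : 0 ≤ M.d x y := by
  have h := M.d_triangle x y x
  rw [M.d_self, M.d_symm y x] at h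
  linarith

lemma d_eq_d_one_mul_inv (a b : G) : M.d a b = M.d 1 (a * b⁻¹) := by
  rw [M.d_symm 1, ← M.right_invariant (a * b⁻¹) 1 b, inv_mul_cancel_right, one_mul]

lemma isOpen_setOf_d_lt (x : G) (ε : ℝ) : IsOpen {y | M.d x y < ε} := by
  rw [M.compatible]
  intro y hy
  refine ⟨ε - M.d x y, sub_pos.mpr hy, fun z (hz : M.d y z < ε - M.d x y) => ?_⟩
  show M.d x z < ε
  linarith [M.d_triangle x y z]

lemma continuous_d (x : G) : Continuous (M.d x) := by
  refine continuous_iff_continuousAt.mpr fun g₀ => Metric.tendsto_nhds.mpr fun ε hε => ?_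
  have hball : {y | M.d g₀ y < ε} ∈ nhds g₀ :=
    (M.isOpen_setOf_d_lt g₀ ε).mem_nhds (by simpa [M.d_self] using hε)
  filter_upwards [hball] with y hy
  rw [Real.dist_eq, abs_sub_lt_iff]
  have h₁ := M.d_triangle x g₀ y
  have h₂ := M.d_triangle x y g₀
  rw [M.d_symm y g₀] at h₂
  constructor <;> linarith

variable (M₁ M₂ : PRICMetric G)

-- For `t < 0` the ball is empty and the value is the junk `sSup ∅ = 0`.
noncomputable def lengthControl (t : ℝ) : ℝ :=
  sSup (M₂.d 1 '' {g | M₁.d 1 g ≤ t})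

lemma bddAbove_image_closedBall (t : ℝ) : BddAbove (M₂.d 1 '' {g | M₁.d 1 g ≤ t}) :=
  ((M₁.proper 1 t).image (M₂.continuous_d 1)).bddAbove

lemma lengthControl_nonneg (t : ℝ) : 0 ≤ lengthControl M₁ M₂ t :=
  Real.sSup_nonneg <| Set.forall_mem_image.mpr fun g _ => M₂.d_nonneg 1 g

lemma monotone_lengthControl : Monotone (lengthControl M₁ M₂) := by
  intro s t hst
  rcases (M₂.d 1 '' {g | M₁.d 1 g ≤ s}).eq_empty_or_nonempty with hempty | hne
  · rw [lengthControl, hempty, Real.sSup_empty]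
    exact lengthControl_nonneg M₁ M₂ t
  · exact csSup_le_csSup (bddAbove_image_closedBall M₁ M₂ t) hne
      (Set.image_mono fun g hg => le_trans hg hst)

lemma d_le_lengthControl (a b : G) : M₂.d a b ≤ lengthControl M₁ M₂ (M₁.d a b) := by
  rw [M₁.d_eq_d_one_mul_inv, M₂.d_eq_d_one_mul_inv]
  exact le_csSup (bddAbove_image_closedBall M₁ M₂ _)
    (Set.mem_image_of_mem _ (Set.mem_ofPred.mpr le_rfl))

end PRICMetric

section quotDist

variable {G : Type*} [Group G] [TopologicalSpace G]

lemma quotDist_le (M : PRICMetric G) {H : Subgroup G} (g₁ g₂ : G) {h₁ h₂ : G}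
    (hh₁ : h₁ ∈ H) (hh₂ : h₂ ∈ H) : quotDist M H g₁ g₂ ≤ M.d (g₁ * h₁) (g₂ * h₂) :=
  csInf_le ⟨0, by rintro r ⟨_, -, _, -, rfl⟩; exact M.d_nonneg _ _⟩ ⟨h₁, hh₁, h₂, hh₂, rfl⟩

lemma exists_d_lt_quotDist_add (M : PRICMetric G) (H : Subgroup G) (g₁ g₂ : G) {ε : ℝ}
    (hε : 0 < ε) :
    ∃ h₁ ∈ H, ∃ h₂ ∈ H, M.d (g₁ * h₁) (g₂ * h₂) < quotDist M H g₁ g₂ + ε := by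
  obtain ⟨_, ⟨h₁, hh₁, h₂, hh₂, rfl⟩, hlt⟩ :=
    exists_lt_of_csInf_lt (s := {r | ∃ h₁ ∈ H, ∃ h₂ ∈ H, r = M.d (g₁ * h₁) (g₂ * h₂)})
      ⟨_, 1, H.one_mem, 1, H.one_mem, rfl⟩ (lt_add_of_pos_right _ hε)
  exact ⟨h₁, hh₁, h₂, hh₂, hlt⟩

lemma quotDist_nonneg (M : PRICMetric G) (H : Subgroup G) (g₁ g₂ : G) :
    0 ≤ quotDist M H g₁ g₂ :=
  Real.sInf_nonneg <| by rintro r ⟨_, -, _, -, rfl⟩; exact M.d_nonneg _ _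

lemma quotDist_le_of_d_le {M₁ M₂ : PRICMetric G} {f : ℝ → ℝ} (hf : Monotone f)
    (hle : ∀ a b, M₂.d a b ≤ f (M₁.d a b)) (H : Subgroup G) (g₁ g₂ : G) {ε : ℝ} (hε : 0 < ε) :
    quotDist M₂ H g₁ g₂ ≤ f (quotDist M₁ H g₁ g₂ + ε) := by
  obtain ⟨h₁, hh₁, h₂, hh₂, hlt⟩ := exists_d_lt_quotDist_add M₁ H g₁ g₂ hε
  calc quotDist M₂ H g₁ g₂ ≤ M₂.d (g₁ * h₁) (g₂ * h₂) := quotDist_le M₂ g₁ g₂ hh₁ hh₂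
    _ ≤ f (M₁.d (g₁ * h₁) (g₂ * h₂)) := hle _ _
    _ ≤ f (quotDist M₁ H g₁ g₂ + ε) := hf hlt.le

end quotDist

theorem quotient_metrics_uniformly_controlled_general
    {G : Type*} [Group G] [TopologicalSpace G]
    (Gseq : ℕ → Subgroup G)
    (d₁ d₂ : PRICMetric G) :
    ∃ ρ : ℝ → ℝ, (∀ t, 0 ≤ t → 0 ≤ ρ t) ∧ Monotone ρ ∧ Tendsto ρ atTop atTop ∧
      ∀ (n : ℕ) (g₁ g₂ : G),
        quotDist d₂ (Gseq n) g₁ g₂ ≤ ρ (quotDist d₁ (Gseq n) g₁ g₂) := by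
  set σ := PRICMetric.lengthControl d₁ d₂
  have hσ_mono : Monotone σ := PRICMetric.monotone_lengthControl d₁ d₂
  have hσ_nonneg : ∀ t, 0 ≤ σ t := PRICMetric.lengthControl_nonneg d₁ d₂
  -- the summand `t` makes `ρ` tend to infinity even when `σ` is bounded
  refine ⟨fun t => σ (t + 1) + t, fun t ht => add_nonneg (hσ_nonneg _) ht,
    (hσ_mono.comp (monotone_id.add_const 1)).add monotone_id,
    tendsto_atTop_mono (fun t => le_add_of_nonneg_left (hσ_nonneg _)) tendsto_id,
    fun n g₁ g₂ => ?_⟩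
  calc quotDist d₂ (Gseq n) g₁ g₂ ≤ σ (quotDist d₁ (Gseq n) g₁ g₂ + 1) :=
        quotDist_le_of_d_le hσ_mono (PRICMetric.d_le_lengthControl d₁ d₂) _ g₁ g₂ one_pos
    _ ≤ σ (quotDist d₁ (Gseq n) g₁ g₂ + 1) + quotDist d₁ (Gseq n) g₁ g₂ :=
        le_add_of_nonneg_right (quotDist_nonneg d₁ _ g₁ g₂)

/-- Given two proper right-invariant compatible metrics `d¹, d²` on a second
countable locally compact Hausdorff residually compact group `G` with residually compact
approximation `(Gₙ)`, there is one monotone function `ρ` tending to infinity controlling all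
the induced quotient metrics simultaneously: `d²ₙ(x,y) ≤ ρ(d¹ₙ(x,y))` for all `n` and all
cosets `x, y ∈ G/Gₙ`. -/
theorem quotient_metrics_uniformly_controlled
    {G : Type*} [Group G] [TopologicalSpace G] [IsTopologicalGroup G]
    [LocallyCompactSpace G] [T2Space G] [SecondCountableTopology G]
    (Gseq : ℕ → Subgroup G)
    (hclosed : ∀ n, IsClosed ((Gseq n : Set G)))
    (hcc : ∀ n, IsCocompactSubgroup (Gseq n))
    (hinter : (⋂ n, ((Gseq n) : Set G)) = {1})
    (d₁ d₂ : PRICMetric G) :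
    ∃ ρ : ℝ → ℝ, (∀ t, 0 ≤ t → 0 ≤ ρ t) ∧ Monotone ρ ∧ Tendsto ρ atTop atTop ∧
      ∀ (n : ℕ) (g₁ g₂ : G),
        quotDist d₂ (Gseq n) g₁ g₂ ≤ ρ (quotDist d₁ (Gseq n) g₁ g₂) :=
  quotient_metrics_uniformly_controlled_general Gseq d₁ d₂
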